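/- arXiv:2103.08529 — 8 statements merged into one kernel-verified Lean document; each statement's English description precedes it below -/
import Mathlib

section
/- Let α ≥ 1 and let f(x) = x + η·(1/(4x) − α) for x > 0. For any η ∈ [3/(4α²), 1/α²), the interval I(η) = [L(η), U(η)], where L(η) = √η·(1 − α√η) and U(η) = (√η/(4(1 − α√η)))·(5 − 12α√η + 8α²η), is invariant under f, i.e. f(I(η)) ⊆ I(η); moreover the fixed point x* = 1/(4α) of f belongs to I(η). -/
/-!
Write `s = √η` and `t = α s`, so that `1/2 ≤ t < 1`. By AM-GM, `x + s²/(4x) ≥ s`, so `L = s - α s²`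
is the minimum of `f` on `(0, ∞)`, and `U = f(L)`. Since `f x - f y = (x - y)(1 - η/(4xy))`,
`f x ≤ f L` whenever `L ≤ x` and `4xL ≤ η`. That holds on `[L, U]` because
`4 L f(L) = η - 4L(αη - L)` and `L ≤ αη` (i.e. `t ≥ 1/2`), and at the fixed point `1/(4α)` for the
same reason; so `f(x) ≤ U` there.
-/

noncomputable def stepMap (α η x : ℝ) : ℝ := x + η * (1 / (4 * x) - α)

section

variable {α η x y : ℝ}

lemma isFixedPt_stepMap (hα : α ≠ 0) : Function.IsFixedPt (stepMap α η) (1 / (4 * α)) := by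
  unfold Function.IsFixedPt stepMap
  field_simp
  ring

lemma stepMap_sub_stepMap (hx : x ≠ 0) (hy : y ≠ 0) :
    stepMap α η x - stepMap α η y = (x - y) * (1 - η / (4 * x * y)) := by
  unfold stepMap
  field_simp
  ring

lemma stepMap_le_of_four_mul_mul_le (hy : 0 < y) (hyx : y ≤ x) (hxy : 4 * x * y ≤ η) :
    stepMap α η x ≤ stepMap α η y := by
  have hx : 0 < x := hy.trans_le hyx
  have : 1 ≤ η / (4 * x * y) := (one_le_div (by positivity)).2 hxy
  have : (x - y) * (1 - η / (4 * x * y)) ≤ 0 :=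
    mul_nonpos_of_nonneg_of_nonpos (sub_nonneg.2 hyx) (by linarith)
  linarith [stepMap_sub_stepMap (α := α) (η := η) hx.ne' hy.ne']

lemma four_mul_stepMap_mul_le (hy : 0 < y) (hyα : y ≤ α * η) :
    4 * stepMap α η y * y ≤ η := by
  have : 4 * stepMap α η y * y = η - 4 * y * (α * η - y) := by
    unfold stepMap
    field_simp
    ring
  have : 0 ≤ 4 * y * (α * η - y) := mul_nonneg (by positivity) (sub_nonneg.2 hyα)
  linarith

variable {s : ℝ}

lemma mul_one_sub_le_stepMap (hx : 0 < x) : s * (1 - α * s) ≤ stepMap α (s ^ 2) x := by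
  have : stepMap α (s ^ 2) x - s * (1 - α * s) = (2 * x - s) ^ 2 / (4 * x) := by
    unfold stepMap
    field_simp
    ring
  have : 0 ≤ (2 * x - s) ^ 2 / (4 * x) := by positivity
  linarith

lemma stepMap_mul_one_sub (hs : s ≠ 0) (ht : α * s ≠ 1) :
    stepMap α (s ^ 2) (s * (1 - α * s)) =
      s / (4 * (1 - α * s)) * (5 - 12 * α * s + 8 * α ^ 2 * s ^ 2) := by
  have : 1 - s * α ≠ 0 := sub_ne_zero.2 (by rw [mul_comm]; exact ht.symm)
  unfold stepMap
  field_simp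
  ring

end

/-- The interval `I(η) = [L(η), U(η)]` is invariant under
`f x = x + η·(1/(4x) − α)` for `η ∈ [3/(4α²), 1/α²)`, and the fixed point
`x* = 1/(4α)` belongs to `I(η)`. -/
theorem invariant_interval
    (α η : ℝ) (hα : 1 ≤ α)
    (hη₁ : 3 / (4 * α ^ 2) ≤ η) (hη₂ : η < 1 / α ^ 2)
    (f : ℝ → ℝ) (hf : ∀ x : ℝ, f x = x + η * (1 / (4 * x) - α))
    (L U : ℝ)
    (hL : L = Real.sqrt η * (1 - α * Real.sqrt η))
    (hU : U = Real.sqrt η / (4 * (1 - α * Real.sqrt η)) *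
      (5 - 12 * α * Real.sqrt η + 8 * α ^ 2 * η)) :
    Set.MapsTo f (Set.Icc L U) (Set.Icc L U) ∧ 1 / (4 * α) ∈ Set.Icc L U := by
  have hα₀ : 0 < α := by linarith
  obtain rfl : f = stepMap α η := funext hf
  have hη₀ : 0 < η := (by positivity : (0 : ℝ) < 3 / (4 * α ^ 2)).trans_le hη₁
  obtain ⟨s, hs, rfl⟩ : ∃ s, 0 < s ∧ η = s ^ 2 :=
    ⟨√η, Real.sqrt_pos.2 hη₀, (Real.sq_sqrt hη₀.le).symm⟩
  rw [Real.sqrt_sq hs.le] at hL hU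
  have ht_half : 1 / 2 ≤ α * s := by
    rw [div_le_iff₀ (by positivity)] at hη₁
    nlinarith [mul_pos hα₀ hs]
  have ht_one : α * s < 1 := by
    rw [lt_div_iff₀ (by positivity)] at hη₂
    nlinarith [mul_pos hα₀ hs]
  have hL₀ : 0 < L := hL ▸ mul_pos hs (by linarith)
  have hLα : L ≤ α * s ^ 2 := by rw [hL]; nlinarith
  have hUL : U = stepMap α (s ^ 2) L := by rw [hL, stepMap_mul_one_sub hs.ne' ht_one.ne, hU]
  have hLU : 4 * U * L ≤ s ^ 2 := hUL ▸ four_mul_stepMap_mul_le hL₀ hLα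
  have hfix := (isFixedPt_stepMap (η := s ^ 2) hα₀.ne').eq
  have hL_fix : L ≤ 1 / (4 * α) := hL ▸ hfix ▸ mul_one_sub_le_stepMap (by positivity)
  refine ⟨fun x ⟨hLx, hxU⟩ ↦ ⟨hL ▸ mul_one_sub_le_stepMap (hL₀.trans_le hLx), ?_⟩, hL_fix, ?_⟩
  · exact hUL ▸ stepMap_le_of_four_mul_mul_le hL₀ hLx
      ((mul_le_mul_of_nonneg_right (by linarith) hL₀.le).trans hLU)
  · have : 4 * (1 / (4 * α)) * L ≤ s ^ 2 := by
      field_simp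
      linarith
    exact hUL ▸ hfix ▸ stepMap_le_of_four_mul_mul_le hL₀ hL_fix this
end

section
/- Let α ≥ 1 and η ∈ [3/(4α²), 1/α²). Then the strict inequality chain L(η) < 1/(4α) < √η/2 < U(η) holds, where L(η) = √η·(1 − α√η) and U(η) = (√η/(4(1 − α√η)))·(5 − 12α√η + 8α²η). -/
/-! Writing `t = α √η`, each of `L`, `1/(4α)`, `√η/2`, `U` is `1/α` times a function of `t`, and the
hypotheses on `η` say that `√3/2 ≤ t < 1`. The chain then reduces to
`t(1-t) < 1/4 < t/2 < t(5 - 12t + 8t²)/(4(1-t))`, i.e. to `(2t-1)² > 0`, `t > 1/2` and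
`(4t-3)(2t-1) > 0`, all of which hold once `t > 3/4`. -/

open Real

lemma three_quarters_lt_mul_sqrt {α η : ℝ} (hα : 0 < α) (hη : 3 / (4 * α ^ 2) ≤ η) :
    3 / 4 < α * √η := by
  rw [← div_lt_iff₀' hα, Real.lt_sqrt (by positivity)]
  have : 0 < 3 / (4 * α ^ 2) := by positivity
  calc (3 / 4 / α) ^ 2 = 3 / 4 * (3 / (4 * α ^ 2)) := by field_simp
    _ < 3 / (4 * α ^ 2) := by linarith
    _ ≤ η := hη

lemma mul_sqrt_lt_one {α η : ℝ} (hα : 0 < α) (hη : η < 1 / α ^ 2) : α * √η < 1 := by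
  rwa [← lt_div_iff₀' hα, Real.sqrt_lt' (by positivity), div_pow, one_pow]

lemma mul_one_sub_lt_quarter {t : ℝ} (ht : t ≠ 1 / 2) : t * (1 - t) < 1 / 4 := by
  have : 2 * t - 1 ≠ 0 := by contrapose! ht; linarith
  nlinarith [sq_pos_of_ne_zero this]

lemma half_lt_mul_div_one_sub {t : ℝ} (ht₁ : 3 / 4 < t) (ht₂ : t < 1) :
    t / 2 < t * (5 - 12 * t + 8 * t ^ 2) / (4 * (1 - t)) := by
  rw [lt_div_iff₀ (by linarith)]
  have := mul_pos (by linarith : (0:ℝ) < 4 * t - 3) (by linarith : (0:ℝ) < 2 * t - 1)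
  nlinarith [mul_pos (by linarith : (0:ℝ) < t) this]

/-- For `α ≥ 1` and `η ∈ [3/(4α²), 1/α²)` the strict chain
`L(η) < 1/(4α) < √η/2 < U(η)` holds. -/
theorem strict_inequality_chain
    (α η : ℝ) (hα : 1 ≤ α)
    (hη₁ : 3 / (4 * α ^ 2) ≤ η) (hη₂ : η < 1 / α ^ 2)
    (L U : ℝ)
    (hL : L = Real.sqrt η * (1 - α * Real.sqrt η))
    (hU : U = Real.sqrt η / (4 * (1 - α * Real.sqrt η)) *
      (5 - 12 * α * Real.sqrt η + 8 * α ^ 2 * η)) :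
    L < 1 / (4 * α) ∧ 1 / (4 * α) < Real.sqrt η / 2 ∧ Real.sqrt η / 2 < U := by
  have hα₀ : 0 < α := by linarith
  have hη₀ : 0 ≤ η := le_trans (by positivity) hη₁
  have ht₁ := three_quarters_lt_mul_sqrt hα₀ hη₁
  have ht₂ := mul_sqrt_lt_one hα₀ hη₂
  set t := α * √η with ht
  have hs : √η = t / α := by rw [ht]; field_simp
  have hη : α ^ 2 * η = t ^ 2 := by rw [ht, mul_pow, sq_sqrt hη₀]
  refine ⟨?_, ?_, ?_⟩
  · calc L = t * (1 - t) / α := by rw [hL, hs]; ring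
      _ < 1 / 4 / α := (div_lt_div_iff_of_pos_right hα₀).2 (mul_one_sub_lt_quarter (by linarith))
      _ = 1 / (4 * α) := by ring
  · calc 1 / (4 * α) = 1 / 4 / α := by ring
      _ < t / 2 / α := (div_lt_div_iff_of_pos_right hα₀).2 (by linarith)
      _ = √η / 2 := by rw [hs]; ring
  · calc √η / 2 = t / 2 / α := by rw [hs]; ring
      _ < t * (5 - 12 * t + 8 * t ^ 2) / (4 * (1 - t)) / α :=
        (div_lt_div_iff_of_pos_right hα₀).2 (half_lt_mul_div_one_sub ht₁ ht₂)
      _ = U := by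
        rw [hU, mul_assoc 8, hη, mul_assoc 12, ← ht, hs]
        ring
end

section
/- Let α ≥ 1 and η ∈ [3/(4α²), 1/α²), and let f(x) = x + η·(1/(4x) − α). Then f(U(η)) < U(η), where U(η) = (√η/(4(1 − α√η)))·(5 − 12α√η + 8α²η). -/
/-!
For `x > 0` we have `f x < x` iff `1 / (4x) < α`, i.e. `4αx > 1`: `U` lies above the fixed point
`1 / (4α)`. Writing `t = α√η`, one gets `4αU = t(5 - 12t + 8t²)/(1 - t)`, and since
`t(5 - 12t + 8t²) - (1 - t) = (2t - 1)³`, this exceeds `1` as soon as `1/2 < t < 1`. The bounds on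
`η` give `3/4 ≤ t² < 1`.
-/

open Real

lemma add_mul_inv_four_sub_lt_self {α η x : ℝ} (hη : 0 < η) (hx : 0 < x) (h : 1 < 4 * α * x) :
    x + η * (1 / (4 * x) - α) < x := by
  have : 1 / (4 * x) < α := by
    rw [div_lt_iff₀ (by positivity)]
    linarith
  nlinarith

lemma one_lt_four_mul_upper {α s : ℝ} (ht₁ : 1 / 2 < α * s) (ht₂ : α * s < 1) :
    1 < 4 * α * (s / (4 * (1 - α * s)) * (5 - 12 * α * s + 8 * α ^ 2 * s ^ 2)) := by
  have hden : 0 < 1 - α * s := by linarith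
  have hcube : 0 < (2 * (α * s) - 1) ^ 3 := pow_pos (by linarith) 3
  rw [show 4 * α * (s / (4 * (1 - α * s)) * (5 - 12 * α * s + 8 * α ^ 2 * s ^ 2))
      = α * s * (5 - 12 * (α * s) + 8 * (α * s) ^ 2) / (1 - α * s) by field_simp,
    lt_div_iff₀ hden]
  nlinarith

lemma mul_sqrt_mem_Ioo {α η : ℝ} (hα : 0 < α) (hη₁ : 3 / (4 * α ^ 2) ≤ η) (hη₂ : η < 1 / α ^ 2) :
    1 / 2 < α * √η ∧ α * √η < 1 := by
  have hαη : α * √η = √(α ^ 2 * η) := by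
    rw [sqrt_mul (sq_nonneg α), sqrt_sq hα.le]
  rw [hαη, lt_sqrt (by norm_num), sqrt_lt' one_pos]
  rw [div_le_iff₀ (by positivity)] at hη₁
  rw [lt_div_iff₀ (by positivity)] at hη₂
  constructor <;> linarith

/-- For `α ≥ 1` and `η ∈ [3/(4α²), 1/α²)` one has `f(U(η)) < U(η)`, where
`f x = x + η·(1/(4x) − α)`. -/
theorem f_U_lt_U
    (α η : ℝ) (hα : 1 ≤ α)
    (hη₁ : 3 / (4 * α ^ 2) ≤ η) (hη₂ : η < 1 / α ^ 2)
    (f : ℝ → ℝ) (hf : ∀ x : ℝ, f x = x + η * (1 / (4 * x) - α))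
    (U : ℝ)
    (hU : U = Real.sqrt η / (4 * (1 - α * Real.sqrt η)) *
      (5 - 12 * α * Real.sqrt η + 8 * α ^ 2 * η)) :
    f U < U := by
  have hα₀ : 0 < α := by linarith
  have hη₀ : 0 < η := lt_of_lt_of_le (by positivity) hη₁
  obtain ⟨ht₁, ht₂⟩ := mul_sqrt_mem_Ioo hα₀ hη₁ hη₂
  have h4U : 1 < 4 * α * U := by
    have h := one_lt_four_mul_upper ht₁ ht₂
    rwa [sq_sqrt hη₀.le, ← hU] at h
  have hU₀ : 0 < U := pos_of_mul_pos_right (one_pos.trans h4U) (by positivity)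
  rw [hf]
  exact add_mul_inv_four_sub_lt_self hη₀ hU₀ h4U
end

section
/- Consider a quasi-linear Fisher market with n firms and m goods, budgets K_i > 0 and valuations v_{ij} > 0. Let b⁰ be any spending matrix with all entries strictly positive and ∑_j b⁰_{ij} ≤ K_i for all i, and define the PR-QLIN iterates: y^t_{ij} = b^t_{ij}/p_j(b^t), S^t_i = ∑_j v_{ij}·y^t_{ij}, and b^{t+1}_{ij} = v_{ij}·y^t_{ij}·min(1, K_i/S^t_i). Then for every minimizer b* of F over C and every integer t ≥ 1, F(b^t) − F(b*) ≤ KL(b*‖b⁰)/t; in particular F(b^t) converges to min_{b∈C} F(b), and the iterates converge to the set of market equilibrium spending vectors, i.e. the set of minimizers of F over C. -/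
/-!
PR-QLIN is mirror descent for the convex objective `F` with the Kullback–Leibler divergence as
distance. Writing `F(a) - F(b) = ⟨∇F(b), a - b⟩ + ∑ⱼ KL(pⱼ(a) ‖ pⱼ(b))`, the log-sum inequality
bounds the last term by `KL(a ‖ b)` (relative smoothness) and it is nonnegative (convexity).
The step `b ↦ b'` satisfies `log b' - log b = -∇F(b) + log μᵢ` with `μᵢ = min 1 (Kᵢ / Sᵢ)`, and
`log μᵢ < 0` only when firm `i` spends its whole budget; with the three-point identity of `KL`
this gives `F(b') ≤ F(u) + KL(u ‖ b) - KL(u ‖ b')` for every feasible `u`. Taking `u = b` shows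
that `F` decreases along the iterates, and telescoping with `u = b*` gives
`t (F(bᵗ) - F(b*)) ≤ KL(b* ‖ b⁰)`. Convergence to the set of minimizers then follows from
compactness of `C` and continuity of `F`.
-/

open Real Finset Filter Topology InformationTheory

theorem mul_klFun_div {x y : ℝ} (hy : y ≠ 0) :
    y * klFun (x / y) = x * log (x / y) - x + y := by
  rw [klFun]; field_simp; ring

theorem mul_log_div_eq {x y : ℝ} (hy : y ≠ 0) : x * log (x / y) = x * log x - x * log y := by
  rcases eq_or_ne x 0 with rfl | hx
  · simp
  · rw [log_div hx hy]; ring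

theorem mul_log_sub_self_sub {x y : ℝ} (hy : 0 < y) :
    x * log x - x - (y * log y - y) = (x - y) * log y + y * klFun (x / y) := by
  rw [mul_klFun_div hy.ne', mul_log_div_eq hy.ne']; ring

theorem mul_klFun_three_point {u x y : ℝ} (hx : 0 < x) (hy : 0 < y) :
    y * klFun (u / y) - x * klFun (u / x) - y * klFun (x / y) = (u - x) * (log x - log y) := by
  rw [mul_klFun_div hy.ne', mul_klFun_div hx.ne', mul_klFun_div hy.ne', mul_log_div_eq hy.ne',
    mul_log_div_eq hx.ne', mul_log_div_eq hy.ne']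
  ring

theorem mul_min_one_div_le {S K : ℝ} (hS : 0 ≤ S) (hK : 0 ≤ K) : S * min 1 (K / S) ≤ K := by
  rcases hS.eq_or_lt with rfl | hS
  · simpa using hK
  · rw [mul_min_of_nonneg _ _ hS.le, mul_one, mul_div_cancel₀ _ hS.ne']
    exact min_le_right _ _

theorem sub_mul_min_one_div_mul_log_nonneg {S K U : ℝ} (hS : 0 ≤ S) (hK : 0 ≤ K) (hU : U ≤ K) :
    0 ≤ (U - S * min 1 (K / S)) * log (min 1 (K / S)) := by
  rcases le_or_gt 1 (K / S) with h | h
  · simp [min_eq_left h]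
  rcases hS.eq_or_lt with rfl | hS
  · simp
  rw [min_eq_right h.le, mul_div_cancel₀ _ hS.ne']
  exact mul_nonneg_of_nonpos_of_nonpos (by linarith) (log_nonpos (div_nonneg hK hS.le) h.le)

theorem sum_mul_klFun_div_le {α : Type*} (s : Finset α) {x y : α → ℝ}
    (hx : ∀ i ∈ s, 0 ≤ x i) (hy : ∀ i ∈ s, 0 < y i) :
    (∑ i ∈ s, y i) * klFun ((∑ i ∈ s, x i) / ∑ i ∈ s, y i) ≤ ∑ i ∈ s, y i * klFun (x i / y i) := by
  rcases s.eq_empty_or_nonempty with rfl | hs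
  · simp
  set Y := ∑ i ∈ s, y i
  have hY : 0 < Y := sum_pos hy hs
  have hjensen := convexOn_klFun.map_sum_le (t := s) (w := fun i => y i / Y)
    (p := fun i => x i / y i) (fun i hi => (div_pos (hy i hi) hY).le)
    (by rw [← sum_div, div_self hY.ne'])
    (fun i hi => Set.mem_Ici.2 (div_nonneg (hx i hi) (hy i hi).le))
  have hmean : ∑ i ∈ s, (y i / Y) • (x i / y i) = (∑ i ∈ s, x i) / Y := by
    rw [sum_div]
    exact sum_congr rfl fun i hi => by rw [smul_eq_mul]; field_simp [(hy i hi).ne']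
  rw [hmean] at hjensen
  calc Y * klFun ((∑ i ∈ s, x i) / Y)
      ≤ Y * ∑ i ∈ s, (y i / Y) • klFun (x i / y i) := mul_le_mul_of_nonneg_left hjensen hY.le
    _ = ∑ i ∈ s, y i * klFun (x i / y i) := by
      rw [mul_sum]; exact sum_congr rfl fun i _ => by rw [smul_eq_mul]; field_simp

section BregmanDescent

variable {X : Type*}

structure IsBregmanDescent (F : X → ℝ) (D : X → X → ℝ) (C : Set X) (x : ℕ → X) : Prop where
  mem : ∀ t, x t ∈ C
  nonneg : ∀ u ∈ C, ∀ t, 0 ≤ D u (x t)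
  self_eq_zero : ∀ t, D (x t) (x t) = 0
  le_add_sub : ∀ u ∈ C, ∀ t, F (x (t + 1)) ≤ F u + D u (x t) - D u (x (t + 1))

namespace IsBregmanDescent

variable {F : X → ℝ} {D : X → X → ℝ} {C : Set X} {x : ℕ → X}

theorem natCast_mul_sub_le (h : IsBregmanDescent F D C x) {u : X} (hu : u ∈ C) (t : ℕ) :
    (t : ℝ) * (F (x t) - F u) ≤ D u (x 0) := by
  suffices key : ∀ t : ℕ, (t : ℝ) * (F (x t) - F u) ≤ D u (x 0) - D u (x t) by
    linarith [key t, h.nonneg u hu t]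
  intro t
  induction t with
  | zero => simp
  | succ t ih =>
    have hmono : F (x (t + 1)) ≤ F (x t) := by
      linarith [h.le_add_sub (x t) (h.mem t) t, h.self_eq_zero t, h.nonneg (x t) (h.mem t) (t + 1)]
    push_cast
    nlinarith [h.le_add_sub u hu t, mul_le_mul_of_nonneg_left hmono t.cast_nonneg]

theorem tendsto (h : IsBregmanDescent F D C x) {u : X} (hu : u ∈ C)
    (hmin : ∀ w ∈ C, F u ≤ F w) : Tendsto (fun t => F (x t)) atTop (𝓝 (F u)) := by
  refine tendsto_of_tendsto_of_tendsto_of_le_of_le' tendsto_const_nhds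
    (by simpa using (tendsto_const_div_atTop_nhds_zero_nat (D u (x 0))).const_add (F u))
    (Eventually.of_forall fun t => hmin _ (h.mem t)) ?_
  filter_upwards [eventually_gt_atTop 0] with t ht
  rw [← sub_le_iff_le_add', le_div_iff₀ (by exact_mod_cast ht), mul_comm]
  exact h.natCast_mul_sub_le hu t

end IsBregmanDescent

end BregmanDescent

theorem tendsto_infDist_setOf_isMin {X : Type*} [MetricSpace X] {C : Set X} (hC : IsCompact C)
    {F : X → ℝ} (hF : ContinuousOn F C) {x : ℕ → X} (hx : ∀ t, x t ∈ C) {c : ℝ}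
    (hc : ∀ w ∈ C, c ≤ F w) (hlim : Tendsto (fun t => F (x t)) atTop (𝓝 c)) :
    Tendsto (fun t => Metric.infDist (x t) {w | w ∈ C ∧ ∀ w' ∈ C, F w ≤ F w'}) atTop (𝓝 0) := by
  set M := {w | w ∈ C ∧ ∀ w' ∈ C, F w ≤ F w'}
  refine tendsto_order.2
    ⟨fun a ha => Eventually.of_forall fun t => ha.trans_le Metric.infDist_nonneg, fun ε hε => ?_⟩
  set far := C ∩ {w | ε ≤ Metric.infDist w M}
  suffices hfar : ∀ᶠ t in atTop, x t ∉ far by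
    filter_upwards [hfar] with t ht
    exact lt_of_not_ge fun hge => ht ⟨hx t, hge⟩
  rcases far.eq_empty_or_nonempty with hempty | hne
  · simp [hempty]
  have hfar_compact : IsCompact far :=
    hC.inter_right (isClosed_le continuous_const (Metric.continuous_infDist_pt M))
  obtain ⟨w₀, hw₀, hw₀min⟩ := hfar_compact.exists_isMinOn hne (hF.mono Set.inter_subset_left)
  have hlt : c < F w₀ := by
    refine (hc w₀ hw₀.1).lt_of_ne fun heq => ?_
    have hw₀M : w₀ ∈ M := ⟨hw₀.1, fun w' hw' => heq ▸ hc w' hw'⟩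
    linarith [hw₀.2.trans_eq (Metric.infDist_zero_of_mem hw₀M)]
  filter_upwards [hlim.eventually (gt_mem_nhds hlt)] with t ht hmem
  exact (hw₀min hmem).not_gt ht

namespace QuasiLinearFisher

variable {ι κ : Type*}

def budgetSet [Fintype κ] (K : ι → ℝ) : Set (ι → κ → ℝ) :=
  {b | (∀ i j, 0 ≤ b i j) ∧ ∀ i, ∑ j, b i j ≤ K i}

theorem isCompact_budgetSet [Fintype κ] (K : ι → ℝ) :
    IsCompact (budgetSet K : Set (ι → κ → ℝ)) := by
  have hclosed : IsClosed (budgetSet K : Set (ι → κ → ℝ)) := by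
    simp only [budgetSet, Set.ofPred_and, Set.ofPred_forall]
    exact (isClosed_iInter fun i => isClosed_iInter fun j =>
      isClosed_le (by fun_prop) (by fun_prop)).inter
        (isClosed_iInter fun i => isClosed_le (by fun_prop) (by fun_prop))
  refine (isCompact_univ_pi fun i => isCompact_univ_pi fun _ =>
    isCompact_Icc (a := 0) (b := K i)).of_isClosed_subset hclosed ?_
  intro b ⟨hb0, hbK⟩
  exact Set.mem_univ_pi.2 fun i => Set.mem_univ_pi.2 fun j =>
    ⟨hb0 i j, (single_le_sum (fun j' _ => hb0 i j') (mem_univ j)).trans (hbK i)⟩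

def price [Fintype ι] (b : ι → κ → ℝ) (j : κ) : ℝ := ∑ i, b i j

theorem price_pos [Fintype ι] [Nonempty ι] {b : ι → κ → ℝ} (hb : ∀ i j, 0 < b i j) (j : κ) :
    0 < price b j :=
  sum_pos (fun i _ => hb i j) univ_nonempty

variable [Fintype ι] [Fintype κ]

noncomputable def objective (K : ι → ℝ) (v b : ι → κ → ℝ) : ℝ :=
  -(∑ i, ∑ j, b i j * log (v i j)) + ∑ i, (K i - ∑ j, b i j) +
    ∑ j, price b j * log (price b j)

noncomputable def klDiv (u w : ι → κ → ℝ) : ℝ := ∑ i, ∑ j, w i j * klFun (u i j / w i j)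

noncomputable def utility (v b : ι → κ → ℝ) (i : ι) : ℝ := ∑ j, v i j * (b i j / price b j)

noncomputable def prStep (K : ι → ℝ) (v b : ι → κ → ℝ) : ι → κ → ℝ :=
  fun i j => v i j * (b i j / price b j) * min 1 (K i / utility v b i)

theorem continuous_objective (K : ι → ℝ) (v : ι → κ → ℝ) : Continuous (objective K v) := by
  unfold objective price
  fun_prop

theorem klDiv_nonneg {u w : ι → κ → ℝ} (hu : ∀ i j, 0 ≤ u i j) (hw : ∀ i j, 0 ≤ w i j) :
    0 ≤ klDiv u w :=
  sum_nonneg fun i _ => sum_nonneg fun j _ =>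
    mul_nonneg (hw i j) (klFun_nonneg (div_nonneg (hu i j) (hw i j)))

theorem klDiv_self (w : ι → κ → ℝ) : klDiv w w = 0 := by
  refine sum_eq_zero fun i _ => sum_eq_zero fun j _ => ?_
  rcases eq_or_ne (w i j) 0 with h | h
  · simp [h]
  · simp [div_self h, klFun_one]

theorem klDiv_eq {u w : ι → κ → ℝ} (hw : ∀ i j, w i j ≠ 0) :
    klDiv u w = (∑ i, ∑ j, u i j * log (u i j / w i j)) - (∑ i, ∑ j, u i j) +
      ∑ i, ∑ j, w i j := by
  simp only [klDiv, mul_klFun_div (hw _ _), sum_add_distrib, sum_sub_distrib]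

theorem klDiv_sub_klDiv_sub_klDiv {u x y : ι → κ → ℝ} (hx : ∀ i j, 0 < x i j)
    (hy : ∀ i j, 0 < y i j) :
    klDiv u y - klDiv u x - klDiv x y =
      ∑ i, ∑ j, (u i j - x i j) * (log (x i j) - log (y i j)) := by
  simp only [klDiv, ← sum_sub_distrib, mul_klFun_three_point (hx _ _) (hy _ _)]

theorem sum_price_mul_klFun_le_klDiv {a b : ι → κ → ℝ} (ha : ∀ i j, 0 ≤ a i j)
    (hb : ∀ i j, 0 < b i j) :
    ∑ j, price b j * klFun (price a j / price b j) ≤ klDiv a b := by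
  rw [klDiv, sum_comm]
  exact sum_le_sum fun j _ => sum_mul_klFun_div_le univ (fun i _ => ha i j) (fun i _ => hb i j)

theorem objective_eq (K : ι → ℝ) (v a : ι → κ → ℝ) :
    objective K v a = ∑ i, K i +
      ∑ j, (price a j * log (price a j) - price a j - ∑ i, a i j * log (v i j)) := by
  simp only [objective, price, sum_sub_distrib]
  rw [sum_comm (f := fun i j => a i j), sum_comm (f := fun i j => a i j * log (v i j))]
  ring

theorem objective_sub_objective (K : ι → ℝ) (v a : ι → κ → ℝ) {b : ι → κ → ℝ}
    (hq : ∀ j, 0 < price b j) :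
    objective K v a - objective K v b =
      ∑ i, ∑ j, (a i j - b i j) * (log (price b j) - log (v i j)) +
        ∑ j, price b j * klFun (price a j / price b j) := by
  rw [objective_eq, objective_eq, add_sub_add_left_eq_sub, ← sum_sub_distrib, sum_comm,
    ← sum_add_distrib]
  refine sum_congr rfl fun j _ => ?_
  have := mul_log_sub_self_sub (x := price a j) (hq j)
  simp only [mul_sub, sub_mul, sum_sub_distrib, ← sum_mul]
  simp only [price] at this ⊢
  linarith

variable {K : ι → ℝ} {v b : ι → κ → ℝ}

theorem utility_nonneg (hv : ∀ i j, 0 < v i j) (hb : ∀ i j, 0 < b i j) (i : ι) :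
    0 ≤ utility v b i :=
  sum_nonneg fun j _ => mul_nonneg (hv i j).le (div_nonneg (hb i j).le
    (sum_nonneg fun i' _ => (hb i' j).le))

theorem utility_pos [Nonempty κ] (hv : ∀ i j, 0 < v i j) (hb : ∀ i j, 0 < b i j) (i : ι) :
    0 < utility v b i :=
  have : Nonempty ι := ⟨i⟩
  sum_pos (fun j _ => mul_pos (hv i j) (div_pos (hb i j) (price_pos hb j))) univ_nonempty

theorem log_prStep (hK : ∀ i, 0 < K i) (hv : ∀ i j, 0 < v i j) (hb : ∀ i j, 0 < b i j)
    (i : ι) (j : κ) :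
    log (prStep K v b i j) =
      log (v i j) + log (b i j) - log (price b j) + log (min 1 (K i / utility v b i)) := by
  have : Nonempty ι := ⟨i⟩
  have : Nonempty κ := ⟨j⟩
  have hq := price_pos hb j
  have hμ : 0 < min 1 (K i / utility v b i) :=
    lt_min one_pos (div_pos (hK i) (utility_pos hv hb i))
  rw [prStep, log_mul (mul_pos (hv i j) (div_pos (hb i j) hq)).ne' hμ.ne',
    log_mul (hv i j).ne' (div_pos (hb i j) hq).ne',
    log_div (hb i j).ne' hq.ne']
  ring

theorem prStep_pos (hK : ∀ i, 0 < K i) (hv : ∀ i j, 0 < v i j) (hb : ∀ i j, 0 < b i j)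
    (i : ι) (j : κ) : 0 < prStep K v b i j := by
  have : Nonempty ι := ⟨i⟩
  have : Nonempty κ := ⟨j⟩
  exact mul_pos (mul_pos (hv i j) (div_pos (hb i j) (price_pos hb j)))
    (lt_min one_pos (div_pos (hK i) (utility_pos hv hb i)))

theorem sum_prStep (i : ι) :
    ∑ j, prStep K v b i j = utility v b i * min 1 (K i / utility v b i) := by
  simp only [prStep, utility, sum_mul]

theorem prStep_mem_budgetSet (hK : ∀ i, 0 < K i) (hv : ∀ i j, 0 < v i j)
    (hb : ∀ i j, 0 < b i j) : prStep K v b ∈ budgetSet K :=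
  ⟨fun i j => (prStep_pos hK hv hb i j).le, fun i => by
    rw [sum_prStep]; exact mul_min_one_div_le (utility_nonneg hv hb i) (hK i).le⟩

theorem objective_prStep_le (hK : ∀ i, 0 < K i) (hv : ∀ i j, 0 < v i j)
    (hb : ∀ i j, 0 < b i j) {u : ι → κ → ℝ} (hu : u ∈ budgetSet K) :
    objective K v (prStep K v b) ≤ objective K v u + klDiv u b - klDiv u (prStep K v b) := by
  rcases isEmpty_or_nonempty ι with hι | hι
  · -- without firms all spending matrices coincide
    simp [klDiv, Subsingleton.elim (prStep K v b) u]
  set b' := prStep K v b with hb'_def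
  have hq : ∀ j, 0 < price b j := price_pos hb
  have hb' : ∀ i j, 0 < b' i j := prStep_pos hK hv hb
  have hsmooth := objective_sub_objective K v b' hq
  have hconvex := objective_sub_objective K v u hq
  have hlogsum := sum_price_mul_klFun_le_klDiv (fun i j => (hb' i j).le) hb
  have hbregman_nonneg : 0 ≤ ∑ j, price b j * klFun (price u j / price b j) :=
    sum_nonneg fun j _ => mul_nonneg (hq j).le (klFun_nonneg (div_nonneg
      (sum_nonneg fun i _ => hu.1 i j) (hq j).le))
  have hthree : klDiv u b - klDiv u b' - klDiv b' b =
      ∑ i, ∑ j, (b' i j - u i j) * (log (price b j) - log (v i j)) +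
        ∑ i, (∑ j, u i j - ∑ j, b' i j) * log (min 1 (K i / utility v b i)) := by
    rw [klDiv_sub_klDiv_sub_klDiv hb' hb, ← sum_add_distrib]
    refine sum_congr rfl fun i _ => ?_
    simp only [hb'_def, log_prStep hK hv hb]
    rw [← sum_sub_distrib, sum_mul, ← sum_add_distrib]
    exact sum_congr rfl fun j _ => by ring
  have hslack : 0 ≤ ∑ i, (∑ j, u i j - ∑ j, b' i j) * log (min 1 (K i / utility v b i)) :=
    sum_nonneg fun i _ => by
      rw [sum_prStep]
      exact sub_mul_min_one_div_mul_log_nonneg (utility_nonneg hv hb i) (hK i).le (hu.2 i)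
  have hlinear : ∑ i, ∑ j, (b' i j - b i j) * (log (price b j) - log (v i j)) -
      ∑ i, ∑ j, (u i j - b i j) * (log (price b j) - log (v i j)) =
      ∑ i, ∑ j, (b' i j - u i j) * (log (price b j) - log (v i j)) := by
    simp only [← sum_sub_distrib]
    exact sum_congr rfl fun i _ => sum_congr rfl fun j _ => by ring
  linarith

theorem isBregmanDescent_prStep (hK : ∀ i, 0 < K i) (hv : ∀ i j, 0 < v i j)
    {b : ℕ → ι → κ → ℝ} (hstep : ∀ t, b (t + 1) = prStep K v (b t))
    (hb₀ : ∀ i j, 0 < b 0 i j) (hb₀K : b 0 ∈ budgetSet K) :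
    IsBregmanDescent (objective K v) klDiv (budgetSet K) b := by
  have hpos : ∀ t i j, 0 < b t i j := by
    intro t
    induction t with
    | zero => exact hb₀
    | succ t ih => rw [hstep]; exact prStep_pos hK hv ih
  refine ⟨fun t => ?_, fun u hu t => klDiv_nonneg hu.1 fun i j => (hpos t i j).le,
    fun t => klDiv_self (b t), fun u hu t => hstep t ▸ objective_prStep_le hK hv (hpos t) hu⟩
  cases t with
  | zero => exact hb₀K
  | succ t => rw [hstep]; exact prStep_mem_budgetSet hK hv (hpos t)

end QuasiLinearFisher

open QuasiLinearFisher

/-- Convergence of the PR-QLIN proportional-response dynamics in a quasi-linear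
Fisher market: from any positive feasible start, the objective gap after `t`
steps is at most `KL(b*‖b⁰)/t`; in particular the objective values converge to
the minimum, and the iterates converge to the set of market-equilibrium
spendings (the minimizers of `F` over `C`). -/
theorem pr_qlin_converges
    (n m : ℕ) (K : Fin n → ℝ) (v : Fin n → Fin m → ℝ)
    (hK : ∀ i, 0 < K i) (hv : ∀ i j, 0 < v i j)
    (p : (Fin n → Fin m → ℝ) → Fin m → ℝ)
    (hp : ∀ b j, p b j = ∑ i, b i j)
    (C : Set (Fin n → Fin m → ℝ))
    (hC : C = {b | (∀ i j, 0 ≤ b i j) ∧ ∀ i, ∑ j, b i j ≤ K i})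
    (F : (Fin n → Fin m → ℝ) → ℝ)
    (hF : ∀ b, F b = -(∑ i, ∑ j, b i j * Real.log (v i j)) +
      (∑ i, (K i - ∑ j, b i j)) + ∑ j, p b j * Real.log (p b j))
    (KL : (Fin n → Fin m → ℝ) → (Fin n → Fin m → ℝ) → ℝ)
    (hKL : ∀ u w, KL u w = (∑ i, ∑ j, u i j * Real.log (u i j / w i j)) -
      (∑ i, ∑ j, u i j) + ∑ i, ∑ j, w i j)
    (b : ℕ → Fin n → Fin m → ℝ)
    (hb0pos : ∀ i j, 0 < b 0 i j) (hb0C : b 0 ∈ C)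
    (S : ℕ → Fin n → ℝ)
    (hS : ∀ t i, S t i = ∑ j, v i j * (b t i j / p (b t) j))
    (hrec : ∀ t i j,
      b (t + 1) i j = v i j * (b t i j / p (b t) j) * min 1 (K i / S t i)) :
    (∀ bstar ∈ C, (∀ w ∈ C, F bstar ≤ F w) →
      ∀ t : ℕ, 1 ≤ t → F (b t) - F bstar ≤ KL bstar (b 0) / t) ∧
    (∀ bstar ∈ C, (∀ w ∈ C, F bstar ≤ F w) →
      Filter.Tendsto (fun t => F (b t)) Filter.atTop (nhds (F bstar))) ∧
    Filter.Tendsto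
      (fun t => Metric.infDist (b t) {w | w ∈ C ∧ ∀ w' ∈ C, F w ≤ F w'})
      Filter.atTop (nhds 0) := by
  obtain rfl : p = price := funext₂ hp
  obtain rfl : F = objective K v := funext hF
  subst hC
  have hstep : ∀ t, b (t + 1) = prStep K v (b t) := fun t =>
    funext₂ fun i j => by rw [hrec, hS]; rfl
  have hdesc := isBregmanDescent_prStep hK hv hstep hb0pos hb0C
  have hKL0 : ∀ u, KL u (b 0) = klDiv u (b 0) := fun u => by
    rw [hKL, klDiv_eq fun i j => (hb0pos i j).ne']
  obtain ⟨bmin, hbminC, hbmin⟩ := (isCompact_budgetSet K).exists_isMinOn ⟨b 0, hb0C⟩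
    (continuous_objective K v).continuousOn
  rw [isMinOn_iff] at hbmin
  refine ⟨fun u hu _ t ht => ?_, fun u hu hmin => hdesc.tendsto hu hmin, ?_⟩
  · rw [hKL0, le_div_iff₀ (by exact_mod_cast ht), mul_comm]
    exact hdesc.natCast_mul_sub_le hu t
  · exact tendsto_infDist_setOf_isMin (isCompact_budgetSet K)
      (continuous_objective K v).continuousOn hdesc.mem hbmin (hdesc.tendsto hbminC hbmin)
end

section
/- Let C ⊆ ℝ^d be a compact convex set, let h be a convex function on C that is differentiable on the relative interior of C, and let d_h(z′, z) = h(z′) − h(z) − ⟨∇h(z), z′ − z⟩ be the associated Bregman divergence. Let F be differentiable and L-Bregman convex with respect to d_h on C, i.e. for all z′ ∈ C and z in the relative interior of C, F(z) + ⟨∇F(z), z′ − z⟩ ≤ F(z′) ≤ F(z) + ⟨∇F(z), z′ − z⟩ + L·d_h(z′, z). Let z⁰ lie in the relative interior of C and let the Mirror Descent iterates satisfy z^{t+1} ∈ argmin_{z ∈ C} { ⟨∇F(z^t), z − z^t⟩ + L·d_h(z, z^t) }, with each z^t in the relative interior of C. Then for every minimizer z* of F over C and every integer t ≥ 1, F(z^t)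 − F(z*) ≤ L·d_h(z*, z⁰)/t. -/
/-!
The mirror step `u` minimizes `⟪g, · - x⟫ + L d_h(·, x)` over the convex set `C`, so its
first-order optimality condition combined with the three-point identity of Bregman divergences gives
`⟪g, u - x⟫ + L d_h(u, x) + L d_h(w, u) ≤ ⟪g, w - x⟫ + L d_h(w, x)`. Adding the upper Bregman
bound at `u` and the lower one at `z*` yields `F(zᵗ⁺¹) - F(z*) ≤ L d_h(z*, zᵗ) - L d_h(z*, zᵗ⁺¹)`.
Since the values `F(zᵗ)` decrease, summing this telescoping bound gives
`t (F(zᵗ) - F(z*)) ≤ L d_h(z*, z⁰) - L d_h(z*, zᵗ)`, and `d_h ≥ 0` by convexity of `h`.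
-/

open scoped RealInnerProductSpace

section Bregman

variable {E : Type*} [NormedAddCommGroup E] [InnerProductSpace ℝ E]

/-- `bregmanDiv h h' w x` is `d_h(w, x)`, where `h'` is a prescribed gradient field of `h`. -/
def bregmanDiv (h : E → ℝ) (h' : E → E) (w x : E) : ℝ :=
  h w - h x - ⟪h' x, w - x⟫

@[simp]
lemma bregmanDiv_self (h : E → ℝ) (h' : E → E) (x : E) : bregmanDiv h h' x x = 0 := by
  simp [bregmanDiv]

lemma bregmanDiv_three_point (h : E → ℝ) (h' : E → E) (x u w : E) :
    bregmanDiv h h' w x - bregmanDiv h h' w u - bregmanDiv h h' u x = ⟪h' u - h' x, w - u⟫ := by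
  simp only [bregmanDiv, inner_sub_left, inner_sub_right]
  ring

variable [CompleteSpace E]

lemma ConvexOn.inner_sub_le_of_hasGradientAt {C : Set E} {φ : E → ℝ} (hφ : ConvexOn ℝ C φ)
    {x w g : E} (hx : x ∈ C) (hw : w ∈ C) (hd : HasGradientAt φ g x) :
    ⟪g, w - x⟫ ≤ φ w - φ x := by
  have hline : ConvexOn ℝ (AffineMap.lineMap x w ⁻¹' C) (φ ∘ AffineMap.lineMap x w) :=
    hφ.comp_affineMap _
  have hderiv : HasDerivAt (φ ∘ AffineMap.lineMap x w) ⟪g, w - x⟫ (0 : ℝ) := by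
    have hd' : HasFDerivAt φ (InnerProductSpace.toDual ℝ E g) (AffineMap.lineMap x w (0 : ℝ)) := by
      simpa using hd.hasFDerivAt
    simpa using hd'.comp_hasDerivAt (0 : ℝ) AffineMap.hasDerivAt_lineMap
  simpa [slope_def_field] using
    hline.le_slope_of_hasDerivAt (by simpa using hx) (by simpa using hw) one_pos hderiv

lemma ConvexOn.bregmanDiv_nonneg {C : Set E} {h : E → ℝ} {h' : E → E} (hh : ConvexOn ℝ C h)
    {x w : E} (hx : x ∈ C) (hw : w ∈ C) (hd : HasGradientAt h (h' x) x) :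
    0 ≤ bregmanDiv h h' w x := by
  have := hh.inner_sub_le_of_hasGradientAt hx hw hd
  rw [bregmanDiv]
  linarith

lemma IsMinOn.inner_gradient_nonneg {C : Set E} {φ : E → ℝ} {u w g : E} (hC : Convex ℝ C)
    (hmin : IsMinOn φ C u) (hu : u ∈ C) (hw : w ∈ C) (hd : HasGradientAt φ g u) :
    0 ≤ ⟪g, w - u⟫ := by
  simpa using hmin.localize.hasFDerivWithinAt_nonneg hd.hasFDerivAt.hasFDerivWithinAt
    (sub_mem_posTangentConeAt_of_segment_subset (hC.segment_subset hu hw))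

lemma hasGradientAt_inner_add_mul_bregmanDiv {h : E → ℝ} {h' : E → E} {g x u : E} (L : ℝ)
    (hd : HasGradientAt h (h' u) u) :
    HasGradientAt (fun w ↦ ⟪g, w - x⟫ + L * bregmanDiv h h' w x) (g + L • (h' u - h' x)) u := by
  have hinner : ∀ a : E, HasFDerivAt (fun w ↦ ⟪a, w - x⟫) (InnerProductSpace.toDual ℝ E a) u :=
    fun a ↦ by
      simpa [inner_sub_right] using
        (InnerProductSpace.toDual ℝ E a : StrongDual ℝ E).hasFDerivAt.sub_const
          (InnerProductSpace.toDual ℝ E a x)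
  rw [hasGradientAt_iff_hasFDerivAt, map_add, map_smul, map_sub]
  exact (hinner g).add (((hd.hasFDerivAt.sub_const (h x)).sub (hinner (h' x))).const_mul L)

lemma IsMinOn.bregman_three_point {C : Set E} {h : E → ℝ} {h' : E → E} {g x u w : E} {L : ℝ}
    (hC : Convex ℝ C) (hmin : IsMinOn (fun v ↦ ⟪g, v - x⟫ + L * bregmanDiv h h' v x) C u)
    (hu : u ∈ C) (hw : w ∈ C) (hd : HasGradientAt h (h' u) u) :
    ⟪g, u - x⟫ + L * bregmanDiv h h' u x + L * bregmanDiv h h' w u ≤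
      ⟪g, w - x⟫ + L * bregmanDiv h h' w x := by
  have hopt := hmin.inner_gradient_nonneg hC hu hw (hasGradientAt_inner_add_mul_bregmanDiv L hd)
  have hsplit : ⟪g, w - x⟫ = ⟪g, u - x⟫ + ⟪g, w - u⟫ := by
    rw [← inner_add_right, sub_add_sub_cancel']
  rw [inner_add_left, real_inner_smul_left, ← bregmanDiv_three_point] at hopt
  linarith

lemma IsMinOn.sub_le_bregmanDiv_sub {C : Set E} {F h : E → ℝ} {h' : E → E} {g x u w : E} {L : ℝ}
    (hC : Convex ℝ C) (hmin : IsMinOn (fun v ↦ ⟪g, v - x⟫ + L * bregmanDiv h h' v x) C u)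
    (hu : u ∈ C) (hw : w ∈ C) (hd : HasGradientAt h (h' u) u)
    (hupper : F u ≤ F x + ⟪g, u - x⟫ + L * bregmanDiv h h' u x)
    (hlower : F x + ⟪g, w - x⟫ ≤ F w) :
    F u - F w ≤ L * bregmanDiv h h' w x - L * bregmanDiv h h' w u := by
  linarith [hmin.bregman_three_point hC hu hw hd]

end Bregman

lemma natCast_mul_le_sub_of_le_sub_succ {e D : ℕ → ℝ} (he : ∀ s, e (s + 1) ≤ e s)
    (hD : ∀ s, e (s + 1) ≤ D s - D (s + 1)) (n : ℕ) : n * e n ≤ D 0 - D n := by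
  induction n with
  | zero => simp
  | succ m ih =>
    have := mul_le_mul_of_nonneg_left (he m) m.cast_nonneg
    push_cast
    linarith [hD m]

theorem mirror_descent_rate_general
    (d : ℕ) (C : Set (EuclideanSpace ℝ (Fin d)))
    (hCconvex : Convex ℝ C)
    (h F : EuclideanSpace ℝ (Fin d) → ℝ)
    (hgrad Fgrad : EuclideanSpace ℝ (Fin d) → EuclideanSpace ℝ (Fin d))
    (hconv : ConvexOn ℝ C h)
    (hdiff : ∀ z ∈ intrinsicInterior ℝ C, HasGradientAt h (hgrad z) z)
    (dh : EuclideanSpace ℝ (Fin d) → EuclideanSpace ℝ (Fin d) → ℝ)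
    (hdh : ∀ z' z, dh z' z =
      h z' - h z - (inner ℝ (hgrad z) (z' - z) : ℝ))
    (L : ℝ) (hL : 0 < L)
    (hBregman : ∀ z' ∈ C, ∀ z ∈ intrinsicInterior ℝ C,
      F z + (inner ℝ (Fgrad z) (z' - z) : ℝ) ≤ F z' ∧
      F z' ≤ F z + (inner ℝ (Fgrad z) (z' - z) : ℝ) + L * dh z' z)
    (z : ℕ → EuclideanSpace ℝ (Fin d))
    (hzint : ∀ t, z t ∈ intrinsicInterior ℝ C)
    (hstep : ∀ t, ∀ w ∈ C,
      (inner ℝ (Fgrad (z t)) (z (t + 1) - z t) : ℝ) + L * dh (z (t + 1)) (z t) ≤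
      (inner ℝ (Fgrad (z t)) (w - z t) : ℝ) + L * dh w (z t)) :
    ∀ zstar ∈ C, (∀ w ∈ C, F zstar ≤ F w) →
      ∀ t : ℕ, 1 ≤ t → F (z t) - F zstar ≤ L * dh zstar (z 0) / t := by
  intro zstar hzstar _ t ht
  obtain rfl : dh = bregmanDiv h hgrad := funext₂ hdh
  have hzC : ∀ s, z s ∈ C := fun s ↦ intrinsicInterior_subset (hzint s)
  have hmono : ∀ s, F (z (s + 1)) ≤ F (z s) := fun s ↦ by
    have hupper := (hBregman _ (hzC (s + 1)) _ (hzint s)).2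
    have := hstep s (z s) (hzC s)
    rw [sub_self, inner_zero_right, bregmanDiv_self] at this
    linarith
  have hdesc : ∀ s, F (z (s + 1)) - F zstar ≤
      L * bregmanDiv h hgrad zstar (z s) - L * bregmanDiv h hgrad zstar (z (s + 1)) := fun s ↦
    IsMinOn.sub_le_bregmanDiv_sub hCconvex (fun w hw ↦ hstep s w hw) (hzC (s + 1)) hzstar
      (hdiff _ (hzint (s + 1))) (hBregman _ (hzC (s + 1)) _ (hzint s)).2
      (hBregman _ hzstar _ (hzint s)).1
  have htelescope := natCast_mul_le_sub_of_le_sub_succ (e := fun s ↦ F (z s) - F zstar)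
    (fun s ↦ by linarith [hmono s]) hdesc t
  have hnonneg := hconv.bregmanDiv_nonneg (hzC t) hzstar (hdiff _ (hzint t))
  have := mul_nonneg hL.le hnonneg
  rw [le_div_iff₀ (by exact_mod_cast ht), mul_comm]
  linarith

/-- Mirror Descent guarantee: if `F` is `L`-Bregman convex w.r.t. the Bregman
divergence `d_h` on a compact convex set `C`, and the iterates minimize the
linearized objective plus `L·d_h(·, zᵗ)`, then for every minimizer `z*` of `F`
over `C` and every `t ≥ 1`, `F(zᵗ) − F(z*) ≤ L·d_h(z*, z⁰)/t`. -/
theorem mirror_descent_rate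
    (d : ℕ) (C : Set (EuclideanSpace ℝ (Fin d)))
    (hCcompact : IsCompact C) (hCconvex : Convex ℝ C)
    (h F : EuclideanSpace ℝ (Fin d) → ℝ)
    (hgrad Fgrad : EuclideanSpace ℝ (Fin d) → EuclideanSpace ℝ (Fin d))
    (hconv : ConvexOn ℝ C h)
    (hdiff : ∀ z ∈ intrinsicInterior ℝ C, HasGradientAt h (hgrad z) z)
    (Fdiff : ∀ z ∈ intrinsicInterior ℝ C, HasGradientAt F (Fgrad z) z)
    (dh : EuclideanSpace ℝ (Fin d) → EuclideanSpace ℝ (Fin d) → ℝ)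
    (hdh : ∀ z' z, dh z' z =
      h z' - h z - (inner ℝ (hgrad z) (z' - z) : ℝ))
    (L : ℝ) (hL : 0 < L)
    (hBregman : ∀ z' ∈ C, ∀ z ∈ intrinsicInterior ℝ C,
      F z + (inner ℝ (Fgrad z) (z' - z) : ℝ) ≤ F z' ∧
      F z' ≤ F z + (inner ℝ (Fgrad z) (z' - z) : ℝ) + L * dh z' z)
    (z : ℕ → EuclideanSpace ℝ (Fin d))
    (hzint : ∀ t, z t ∈ intrinsicInterior ℝ C)
    (hstep : ∀ t, ∀ w ∈ C,
      (inner ℝ (Fgrad (z t)) (z (t + 1) - z t) : ℝ) + L * dh (z (t + 1)) (z t) ≤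
      (inner ℝ (Fgrad (z t)) (w - z t) : ℝ) + L * dh w (z t)) :
    ∀ zstar ∈ C, (∀ w ∈ C, F zstar ≤ F w) →
      ∀ t : ℕ, 1 ≤ t → F (z t) - F zstar ≤ L * dh zstar (z 0) / t :=
  mirror_descent_rate_general d C hCconvex h F hgrad Fgrad hconv hdiff dh hdh L hL hBregman z hzint
    hstep
end

section
/- With F, C, p and KL as in the quasi-linear Fisher market setup, for every b′ ∈ C and every b ∈ C with all entries strictly positive, the Bregman gap of F equals the KL divergence between the induced price vectors: F(b′) − F(b) − ∑_{i,j} (b′_{ij} − b_{ij})·(ln p_j(b) − ln v_{ij}) = KL(p(b′)‖p(b)), where p(b) = (p_1(b), …, p_m(b)). -/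
/-!
Only the price-entropy term `∑ⱼ pⱼ ln pⱼ` of `F` is nonlinear: the valuation and budget terms are
linear in `b`, so they drop out of the Bregman gap up to `−∑ⱼ pⱼ(b') + ∑ⱼ pⱼ(b)`, and the
gradient term collapses to `∑ⱼ (pⱼ(b') − pⱼ(b)) ln pⱼ(b)` since `p` is linear. What remains is the
Bregman gap of `x ↦ x ln x` between the price vectors, which is `∑ⱼ pⱼ(b') ln (pⱼ(b') / pⱼ(b))`.
-/

open Finset Real

lemma Real.mul_log_div_eq {u w : ℝ} (h : w = 0 → u = 0) :
    u * log (u / w) = u * log u - u * log w := by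
  rcases eq_or_ne u 0 with hu | hu
  · simp [hu]
  · rw [log_div hu (mt h hu), mul_sub]

lemma Real.sum_mul_log_bregman_eq {ι : Type*} [Fintype ι] (u w : ι → ℝ)
    (h : ∀ j, w j = 0 → u j = 0) :
    ∑ j, u j * log (u j) - ∑ j, w j * log (w j) - ∑ j, (u j - w j) * log (w j)
      = ∑ j, u j * log (u j / w j) := by
  simp only [mul_log_div_eq (h _), sub_mul, sum_sub_distrib]
  ring

lemma Finset.sum_sum_mul_eq_sum_colSum_mul {ι κ R : Type*} [Fintype ι] [Fintype κ]
    [NonUnitalNonAssocSemiring R] (x : ι → κ → R) (c : κ → R) :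
    ∑ i, ∑ j, x i j * c j = ∑ j, (∑ i, x i j) * c j := by
  rw [sum_comm]
  simp only [sum_mul]

theorem bregman_gap_eq_price_KL_general
    (n m : ℕ) (K : Fin n → ℝ) (v : Fin n → Fin m → ℝ)
    (p : (Fin n → Fin m → ℝ) → Fin m → ℝ)
    (hp : ∀ b j, p b j = ∑ i, b i j)
    (F : (Fin n → Fin m → ℝ) → ℝ)
    (hF : ∀ b, F b = -(∑ i, ∑ j, b i j * Real.log (v i j)) +
      (∑ i, (K i - ∑ j, b i j)) + ∑ j, p b j * Real.log (p b j))
    (KLm : (Fin m → ℝ) → (Fin m → ℝ) → ℝ)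
    (hKLm : ∀ u w, KLm u w = (∑ j, u j * Real.log (u j / w j)) -
      (∑ j, u j) + ∑ j, w j)
    (b' b : Fin n → Fin m → ℝ)
    (hbpos : ∀ i j, 0 < b i j) :
    F b' - F b -
        (∑ i, ∑ j, (b' i j - b i j) * (Real.log (p b j) - Real.log (v i j)))
      = KLm (p b') (p b) := by
  have hmass : ∀ x : Fin n → Fin m → ℝ, ∑ i, ∑ j, x i j = ∑ j, p x j := fun x => by
    rw [sum_comm]
    simp only [hp]
  have hgrad : ∑ i, ∑ j, (b' i j - b i j) * log (p b j)
      = ∑ j, (p b' j - p b j) * log (p b j) := by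
    rw [sum_sum_mul_eq_sum_colSum_mul]
    simp only [sum_sub_distrib, hp]
  -- `p b j = 0` forces `n = 0`, since every `b i j` is positive.
  have hac : ∀ j, p b j = 0 → p b' j = 0 := fun j hj => by
    rw [hp, sum_eq_zero_iff_of_nonneg fun i _ => (hbpos i j).le] at hj
    rw [hp]
    exact sum_eq_zero fun i hi => absurd (hj i hi) (hbpos i j).ne'
  rw [hF, hF, hKLm, ← sum_mul_log_bregman_eq _ _ hac, ← hgrad]
  simp only [mul_sub, sum_sub_distrib, sub_mul]
  linarith [hmass b, hmass b']

/-- The Bregman gap of the Fisher-market objective `F` equals the KL divergence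
between the induced price vectors:
`F(b') − F(b) − ⟨∇F(b), b' − b⟩ = KL(p(b')‖p(b))`. -/
theorem bregman_gap_eq_price_KL
    (n m : ℕ) (K : Fin n → ℝ) (v : Fin n → Fin m → ℝ)
    (hK : ∀ i, 0 < K i) (hv : ∀ i j, 0 < v i j)
    (p : (Fin n → Fin m → ℝ) → Fin m → ℝ)
    (hp : ∀ b j, p b j = ∑ i, b i j)
    (C : Set (Fin n → Fin m → ℝ))
    (hC : C = {b | (∀ i j, 0 ≤ b i j) ∧ ∀ i, ∑ j, b i j ≤ K i})
    (F : (Fin n → Fin m → ℝ) → ℝ)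
    (hF : ∀ b, F b = -(∑ i, ∑ j, b i j * Real.log (v i j)) +
      (∑ i, (K i - ∑ j, b i j)) + ∑ j, p b j * Real.log (p b j))
    (KLm : (Fin m → ℝ) → (Fin m → ℝ) → ℝ)
    (hKLm : ∀ u w, KLm u w = (∑ j, u j * Real.log (u j / w j)) -
      (∑ j, u j) + ∑ j, w j)
    (b' b : Fin n → Fin m → ℝ) (hb' : b' ∈ C) (hb : b ∈ C)
    (hbpos : ∀ i j, 0 < b i j) :
    F b' - F b -
        (∑ i, ∑ j, (b' i j - b i j) * (Real.log (p b j) - Real.log (v i j)))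
      = KLm (p b') (p b) :=
  bregman_gap_eq_price_KL_general n m K v p hp F hF KLm hKLm b' b hbpos
end

section
/- Consider n firms and m goods with valuations v_{ij} > 0 and budgets K_i > 0, let C = {b : b_{ij} ≥ 0, ∑_j b_{ij} ≤ K_i for all i}, and let b# minimize F(b) = −∑_{i,j} b_{ij}·ln v_{ij} + ∑_i (K_i − ∑_j b_{ij}) + ∑_j p_j(b)·ln p_j(b) over C, where p_j(b) = ∑_i b_{ij}, and suppose p#_j = p_j(b#) > 0 for all j. Then for each firm i: (i) if ∑_j b#_{ij} = K_i, there exists a constant C̃_i ≥ 1 such that v_{ij}/p#_j ≤ C̃_i for all j, with equality whenever b#_{ij} > 0; (ii) if ∑_j b#_{ij} < K_i, then v_{ij}/p#_j ≤ 1 for all j, with equality whenever b#_{ij} > 0. -/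
/-!
Where all prices are positive, `F` is differentiable with `∂F/∂b_ij = log p_j - log v_ij`: the
`+1` coming from `p log p` cancels the `-1` of the unspent budget term. Since `F` is convex (the
tangent bound `y log y - x log x ≤ (y - x)(log y + 1)`) and `C` is convex, a minimizer `b#`
satisfies the variational inequality `∑ (b - b#)_ij (log p#_j - log v_ij) ≥ 0` for all `b ∈ C`.
Testing it on three moves of firm `i` — withdrawing its spending on good `j`, spending its
unspent budget on `j`, and shifting its spending from `j` to `j'` — gives `p#_j ≤ v_ij` when
`b#_ij > 0`, `v_ij ≤ p#_j` when the budget is slack, and `v_ij'/p#_j' ≤ v_ij/p#_j` when `b#_ij > 0`.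
-/

open Real Finset Filter Topology

lemma mul_log_sub_mul_log_le {x y : ℝ} (hx : 0 < x) (hy : 0 < y) :
    y * log y - x * log x ≤ (y - x) * (log y + 1) := by
  have h := log_le_sub_one_of_pos (div_pos hy hx)
  rw [log_div hy.ne' hx.ne', div_sub_one hx.ne', le_div_iff₀ hx] at h
  linarith

namespace Shmyrev

variable {ι κ : Type*}

def feasible [Fintype κ] (K : ι → ℝ) : Set (ι → κ → ℝ) :=
  {b | (∀ i j, 0 ≤ b i j) ∧ ∀ i, ∑ j, b i j ≤ K i}

lemma convex_feasible [Fintype κ] (K : ι → ℝ) : Convex ℝ (feasible (κ := κ) K) := by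
  rintro b ⟨hb0, hbK⟩ b' ⟨hb0', hbK'⟩ s t hs ht hst
  refine ⟨fun i j => ?_, fun i => ?_⟩
  · simp only [Pi.add_apply, Pi.smul_apply, smul_eq_mul]
    have := hb0 i j; have := hb0' i j; positivity
  · simp only [Pi.add_apply, Pi.smul_apply, smul_eq_mul, sum_add_distrib, ← mul_sum]
    calc s * ∑ j, b i j + t * ∑ j, b' i j ≤ s * K i + t * K i := by
          gcongr
          · exact hbK i
          · exact hbK' i
      _ = K i := by rw [← add_mul, hst, one_mul]

variable [Fintype ι]

def price (b : ι → κ → ℝ) (j : κ) : ℝ := ∑ i, b i j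

lemma price_add_smul_sub (b b' : ι → κ → ℝ) (t : ℝ) (j : κ) :
    price (b + t • (b' - b)) j = price b j + t * (price b' j - price b j) := by
  simp only [price, Pi.add_apply, Pi.smul_apply, Pi.sub_apply, smul_eq_mul, sum_add_distrib,
    ← mul_sum, sum_sub_distrib]

variable [Fintype κ]

noncomputable def objective (v : ι → κ → ℝ) (K : ι → ℝ) (b : ι → κ → ℝ) : ℝ :=
  -(∑ i, ∑ j, b i j * log (v i j)) + (∑ i, (K i - ∑ j, b i j)) +
    ∑ j, price b j * log (price b j)

variable {v : ι → κ → ℝ} {K : ι → ℝ}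

lemma objective_sub_le {b b' : ι → κ → ℝ} (hb : ∀ j, 0 < price b j)
    (hb' : ∀ j, 0 < price b' j) :
    objective v K b' - objective v K b ≤
      ∑ i, ∑ j, (b' i j - b i j) * (log (price b' j) - log (v i j)) := by
  calc objective v K b' - objective v K b
      = ∑ j, (price b' j * log (price b' j) - price b j * log (price b j)) -
          ∑ i, ∑ j, (b' i j - b i j) * (log (v i j) + 1) := by
        simp only [objective, sub_mul, mul_add, mul_one, sum_sub_distrib, sum_add_distrib]
        ring
    _ ≤ ∑ j, (price b' j - price b j) * (log (price b' j) + 1) -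
          ∑ i, ∑ j, (b' i j - b i j) * (log (v i j) + 1) := by
        gcongr with j
        exact mul_log_sub_mul_log_le (hb j) (hb' j)
    _ = ∑ i, ∑ j, (b' i j - b i j) * (log (price b' j) - log (v i j)) := by
        simp only [price, ← sum_sub_distrib, sum_mul]
        rw [sum_comm, ← sum_sub_distrib]
        refine sum_congr rfl fun i _ => ?_
        rw [← sum_sub_distrib]
        exact sum_congr rfl fun j _ => by ring

lemma variational_inequality {C : Set (ι → κ → ℝ)} (hC : Convex ℝ C) {b b' : ι → κ → ℝ}
    (hmin : IsMinOn (objective v K) C b) (hb : b ∈ C) (hb' : b' ∈ C)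
    (hpos : ∀ j, 0 < price b j) :
    0 ≤ ∑ i, ∑ j, (b' i j - b i j) * (log (price b j) - log (v i j)) := by
  set g : ℝ → ℝ := fun t =>
    ∑ i, ∑ j, (b' i j - b i j) * (log (price b j + t * (price b' j - price b j)) - log (v i j))
  have hg : ContinuousAt g 0 := by
    fun_prop (disch := simpa using (hpos _).ne')
  -- `g t` bounds the difference quotient of `F` along the segment from `b` to `b'`.
  have hg_nonneg : ∀ᶠ t in 𝓝[>] 0, 0 ≤ g t := by
    have hprice : ∀ᶠ t in 𝓝 (0 : ℝ), ∀ j, 0 < price b j + t * (price b' j - price b j) :=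
      eventually_all.2 fun j => (Continuous.tendsto (by fun_prop) 0).eventually
        (lt_mem_nhds (by simpa using hpos j))
    filter_upwards [Ioc_mem_nhdsGT zero_lt_one, nhdsWithin_le_nhds hprice] with t ht htpos
    have hbt : b + t • (b' - b) ∈ C := hC.add_smul_sub_mem hb hb' ⟨ht.1.le, ht.2⟩
    have key := objective_sub_le (v := v) (K := K) hpos (b' := b + t • (b' - b))
      (fun j => price_add_smul_sub b b' t j ▸ htpos j)
    refine nonneg_of_mul_nonneg_right ?_ ht.1
    calc 0 ≤ objective v K (b + t • (b' - b)) - objective v K b :=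
          sub_nonneg.2 (isMinOn_iff.1 hmin _ hbt)
      _ ≤ _ := key
      _ = t * g t := by
        simp only [g, mul_sum, price_add_smul_sub, Pi.add_apply, Pi.smul_apply, Pi.sub_apply,
          smul_eq_mul]
        refine sum_congr rfl fun i _ => sum_congr rfl fun j _ => by ring
  simpa [g] using ge_of_tendsto (hg.tendsto.mono_left nhdsWithin_le_nhds) hg_nonneg

variable {b : ι → κ → ℝ}

lemma row_variational_inequality [DecidableEq ι]
    (hmin : IsMinOn (objective v K) (feasible K) b) (hb : b ∈ feasible K)
    (hpos : ∀ j, 0 < price b j) {i : ι} {d : κ → ℝ} (hd0 : ∀ j, 0 ≤ b i j + d j)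
    (hdK : ∑ j, (b i j + d j) ≤ K i) :
    0 ≤ ∑ j, d j * (log (price b j) - log (v i j)) := by
  have hb' : b + Pi.single i d ∈ feasible K := by
    refine ⟨fun i' j => ?_, fun i' => ?_⟩ <;> rcases eq_or_ne i' i with rfl | hi
    · simpa using hd0 j
    · simpa [hi] using hb.1 i' j
    · simpa using hdK
    · simpa [hi] using hb.2 i'
  simpa [Pi.single_apply, ite_apply, ite_mul] using
    variational_inequality (convex_feasible K) hmin hb hb' hpos

variable [DecidableEq ι] [DecidableEq κ] (hmin : IsMinOn (objective v K) (feasible K) b)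
  (hb : b ∈ feasible K) (hpos : ∀ j, 0 < price b j) (hv : ∀ i j, 0 < v i j)
include hmin hb hpos hv

lemma price_le_of_pos {i : ι} {j : κ} (hij : 0 < b i j) : price b j ≤ v i j := by
  have h := row_variational_inequality hmin hb hpos (i := i) (d := Pi.single j (-b i j))
    (fun j' => by by_cases h : j' = j <;> simp [h, hb.1 i j'])
    (by simpa [sum_add_distrib] using (hb.2 i).trans (le_add_of_nonneg_right hij.le))
  simp only [Pi.single_apply, ite_mul, neg_mul, zero_mul, sum_ite_eq', mem_univ, ↓reduceIte,
    Left.nonneg_neg_iff] at h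
  exact (log_le_log_iff (hpos j) (hv i j)).1 (sub_nonpos.1 (nonpos_of_mul_nonpos_right h hij))

lemma le_price_of_sum_lt {i : ι} (hi : ∑ j, b i j < K i) (j : κ) : v i j ≤ price b j := by
  have h := row_variational_inequality hmin hb hpos (i := i)
    (d := Pi.single j (K i - ∑ j, b i j))
    (fun j' => by
      have := hb.1 i j'
      simp only [Pi.single_apply]
      split_ifs <;> linarith)
    (by simp [sum_add_distrib])
  simp only [Pi.single_apply, ite_mul, zero_mul, sum_ite_eq', mem_univ, ↓reduceIte] at h
  exact (log_le_log_iff (hv i j) (hpos j)).1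
    (sub_nonneg.1 (nonneg_of_mul_nonneg_right h (sub_pos.2 hi)))

lemma div_price_le_of_pos {i : ι} {j : κ} (hij : 0 < b i j) (j' : κ) :
    v i j' / price b j' ≤ v i j / price b j := by
  have h := row_variational_inequality hmin hb hpos (i := i)
    (d := Pi.single j' (b i j) - Pi.single j (b i j))
    (fun x => by
      have := hb.1 i x
      simp only [Pi.sub_apply, Pi.single_apply]
      split_ifs <;> subst_vars <;> linarith)
    (by simpa [sum_add_distrib] using hb.2 i)
  simp only [Pi.sub_apply, Pi.single_apply, sub_mul, ite_mul, zero_mul, sum_sub_distrib,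
    sum_ite_eq', mem_univ, ↓reduceIte, sub_nonneg] at h
  rw [← log_le_log_iff (div_pos (hv i j') (hpos j')) (div_pos (hv i j) (hpos j)),
    log_div (hv i j').ne' (hpos j').ne', log_div (hv i j).ne' (hpos j).ne']
  linarith [le_of_mul_le_mul_left h hij]

end Shmyrev

open Shmyrev

/-- First-order characterization of the minimizers of the Shmyrev-type convex
program (i.e. of market-equilibrium spendings of the quasi-linear Fisher
market): for each firm `i`, if the budget is exhausted there is a constant
`C̃ᵢ ≥ 1` bounding `v_{ij}/p#_j`, with equality on supported goods; if the
budget is not exhausted the same holds with constant `1`. -/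
theorem shmyrev_first_order_conditions
    (n m : ℕ) (v : Fin n → Fin m → ℝ) (K : Fin n → ℝ)
    (hv : ∀ i j, 0 < v i j) (hK : ∀ i, 0 < K i)
    (p : (Fin n → Fin m → ℝ) → Fin m → ℝ)
    (hp : ∀ b j, p b j = ∑ i, b i j)
    (C : Set (Fin n → Fin m → ℝ))
    (hC : C = {b | (∀ i j, 0 ≤ b i j) ∧ ∀ i, ∑ j, b i j ≤ K i})
    (F : (Fin n → Fin m → ℝ) → ℝ)
    (hF : ∀ b, F b = -(∑ i, ∑ j, b i j * Real.log (v i j)) +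
      (∑ i, (K i - ∑ j, b i j)) + ∑ j, p b j * Real.log (p b j))
    (bs : Fin n → Fin m → ℝ) (hbsC : bs ∈ C)
    (hmin : ∀ w ∈ C, F bs ≤ F w)
    (ps : Fin m → ℝ) (hpsdef : ∀ j, ps j = p bs j) (hps_pos : ∀ j, 0 < ps j) :
    ∀ i,
      ((∑ j, bs i j = K i) → ∃ Ci : ℝ, 1 ≤ Ci ∧
        ∀ j, v i j / ps j ≤ Ci ∧ (0 < bs i j → v i j / ps j = Ci)) ∧
      ((∑ j, bs i j < K i) →
        ∀ j, v i j / ps j ≤ 1 ∧ (0 < bs i j → v i j / ps j = 1)) := by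
  obtain rfl : p = price := funext₂ hp
  obtain rfl : ps = price bs := funext hpsdef
  obtain rfl : F = objective v K := funext hF
  obtain rfl : C = feasible K := hC
  have hmin : IsMinOn (objective v K) (feasible K) bs := isMinOn_iff.2 hmin
  intro i
  constructor
  · intro hsat
    obtain ⟨j₀, hj₀⟩ : ∃ j₀, 0 < bs i j₀ := by
      simpa using exists_lt_of_sum_lt (s := univ) (f := fun _ => 0) (by simpa [hsat] using hK i)
    have hdiv := div_price_le_of_pos hmin hbsC hps_pos hv hj₀
    refine ⟨v i j₀ / price bs j₀,
      (one_le_div (hps_pos j₀)).2 (price_le_of_pos hmin hbsC hps_pos hv hj₀),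
      fun j => ⟨hdiv j, fun hj => (hdiv j).antisymm
        (div_price_le_of_pos hmin hbsC hps_pos hv hj j₀)⟩⟩
  · intro hslack j
    have hle := le_price_of_sum_lt hmin hbsC hps_pos hv hslack j
    exact ⟨(div_le_one (hps_pos j)).2 hle, fun hj => (div_eq_one_iff_eq (hps_pos j).ne').2
      (hle.antisymm (price_le_of_pos hmin hbsC hps_pos hv hj))⟩
end

section
/- Fix r > 0 and let J(r) be the real 2×2 matrix with rows (0, (1−r)/(2r)) and ((r−1)/2, 0). Then the characteristic polynomial of J(r) is λ² + (r−1)²/(4r); over ℂ its eigenvalues are ±i·(r−1)/(2√r), each of modulus |r−1|/(2√r); and, with r₀ = 3 + 2√2, this modulus is strictly less than 1 if and only if r₀⁻¹ < r < r₀, equal to 1 if and only if r = r₀ or r = r₀⁻¹, and strictly greater than 1 if and only if 0 < r < r₀⁻¹ or r > r₀. In particular, |r−1|/(2√r) = 1 if and only if r² − 6r + 1 = 0. -/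
/-!
`J(r)` is antidiagonal, so its characteristic polynomial is `X² − bc` with
`bc = −(r−1)²/(4r) < 0`, and its eigenvalues are the two square roots `±i(r−1)/(2√r)` of `bc`.
Their modulus compares with `1` as `(r−1)²` compares with `4r`, i.e. as `r² − 6r + 1`
compares with `0`; since `r₀ · r₀⁻¹ = 1` and `r₀ + r₀⁻¹ = 6`, this quadratic factors as
`(r − r₀⁻¹)(r − r₀)`.
-/

open Polynomial Real

namespace Matrix

lemma map_antidiag {R S : Type*} [Zero R] [Zero S] {f : R → S} (hf : f 0 = 0) (b c : R) :
    (!![0, b; c, 0] : Matrix (Fin 2) (Fin 2) R).map f = !![0, f b; f c, 0] := by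
  ext i j
  fin_cases i <;> fin_cases j <;> simp [hf]

lemma charpoly_antidiag {R : Type*} [CommRing R] [Nontrivial R] (b c : R) :
    (!![0, b; c, 0] : Matrix (Fin 2) (Fin 2) R).charpoly = X ^ 2 - C (b * c) := by
  simp [charpoly_fin_two, trace_fin_two_of, det_fin_two_of, sub_eq_add_neg]

lemma spectrum_antidiag {K : Type*} [Field K] {b c z : K} (hz : z ^ 2 = b * c) :
    spectrum K !![0, b; c, 0] = {z, -z} := by
  ext μ
  rw [mem_spectrum_iff_isRoot_charpoly, charpoly_antidiag, ← hz, IsRoot.def]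
  simp [sub_eq_zero, sq_eq_sq_iff_eq_or_eq_neg]

end Matrix

section Tullock

variable {r : ℝ}

lemma tullock_antidiag_mul (hr : r ≠ 0) :
    (1 - r) / (2 * r) * ((r - 1) / 2) = -((r - 1) ^ 2 / (4 * r)) := by
  field_simp
  ring

lemma sq_I_mul_sub_one_div_two_sqrt (hr : 0 < r) :
    (Complex.I * ((r : ℂ) - 1) / (2 * (√r : ℂ))) ^ 2 =
      (((1 - r) / (2 * r) : ℝ) : ℂ) * (((r - 1) / 2 : ℝ) : ℂ) := by
  have hsqrt : (√r : ℂ) ^ 2 = r := by exact_mod_cast sq_sqrt hr.le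
  have hr' : (r : ℂ) ≠ 0 := by exact_mod_cast hr.ne'
  have hsqrt' : (√r : ℂ) ≠ 0 := by exact_mod_cast (sqrt_pos.mpr hr).ne'
  push_cast
  rw [div_pow, mul_pow, mul_pow, Complex.I_sq, hsqrt]
  field_simp
  ring

lemma norm_I_mul_sub_one_div_two_sqrt :
    ‖Complex.I * ((r : ℂ) - 1) / (2 * (√r : ℂ))‖ = |r - 1| / (2 * √r) := by
  have hcast : (r : ℂ) - 1 = ((r - 1 : ℝ) : ℂ) := by push_cast; rfl
  rw [hcast]
  simp [abs_of_nonneg (sqrt_nonneg r), -Complex.ofReal_sub]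

lemma sq_sub_six_mul_add_one_eq_sq_abs_sub_sq (hr : 0 ≤ r) :
    r ^ 2 - 6 * r + 1 = |r - 1| ^ 2 - (2 * √r) ^ 2 := by
  rw [sq_abs, mul_pow, sq_sqrt hr]
  ring

lemma abs_sub_one_div_two_sqrt_lt_one_iff (hr : 0 < r) :
    |r - 1| / (2 * √r) < 1 ↔ r ^ 2 - 6 * r + 1 < 0 := by
  rw [div_lt_one (by positivity), sq_sub_six_mul_add_one_eq_sq_abs_sub_sq hr.le, sub_neg,
    pow_lt_pow_iff_left₀ (abs_nonneg _) (by positivity) two_ne_zero]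

lemma abs_sub_one_div_two_sqrt_eq_one_iff (hr : 0 < r) :
    |r - 1| / (2 * √r) = 1 ↔ r ^ 2 - 6 * r + 1 = 0 := by
  rw [div_eq_one_iff_eq (by positivity), sq_sub_six_mul_add_one_eq_sq_abs_sub_sq hr.le,
    sub_eq_zero, pow_left_inj₀ (abs_nonneg _) (by positivity) two_ne_zero]

lemma one_lt_abs_sub_one_div_two_sqrt_iff (hr : 0 < r) :
    1 < |r - 1| / (2 * √r) ↔ 0 < r ^ 2 - 6 * r + 1 := by
  rw [one_lt_div (by positivity), sq_sub_six_mul_add_one_eq_sq_abs_sub_sq hr.le, sub_pos,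
    pow_lt_pow_iff_left₀ (by positivity) (abs_nonneg _) two_ne_zero]

lemma inv_three_add_two_mul_sqrt_two : (3 + 2 * √2)⁻¹ = 3 - 2 * √2 :=
  inv_eq_of_mul_eq_one_right <| by linear_combination (-4 : ℝ) * sq_sqrt zero_le_two

lemma inv_three_add_two_mul_sqrt_two_lt : (3 + 2 * √2)⁻¹ < 3 + 2 * √2 := by
  rw [inv_three_add_two_mul_sqrt_two]
  linarith [sqrt_pos.mpr zero_lt_two]

lemma sq_sub_six_mul_add_one_eq_mul (r : ℝ) :
    r ^ 2 - 6 * r + 1 = (r - (3 + 2 * √2)⁻¹) * (r - (3 + 2 * √2)) := by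
  rw [inv_three_add_two_mul_sqrt_two]
  linear_combination (4 : ℝ) * sq_sqrt zero_le_two

end Tullock

/-- For `J(r) = !![0, (1−r)/(2r); (r−1)/2, 0]`: its characteristic polynomial
is `λ² + (r−1)²/(4r)`; over `ℂ` its spectrum is `{±i(r−1)/(2√r)}`, each
eigenvalue having modulus `|r−1|/(2√r)`; this modulus is `< 1` iff
`r₀⁻¹ < r < r₀`, `= 1` iff `r = r₀` or `r = r₀⁻¹`, and `> 1` iff `r < r₀⁻¹`
or `r > r₀`, where `r₀ = 3 + 2√2`; in particular it equals `1` iff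
`r² − 6r + 1 = 0`. -/
theorem tullock_jacobian_spectrum
    (r : ℝ) (hr : 0 < r)
    (J : Matrix (Fin 2) (Fin 2) ℝ)
    (hJ : J = !![0, (1 - r) / (2 * r); (r - 1) / 2, 0])
    (r₀ : ℝ) (hr₀ : r₀ = 3 + 2 * Real.sqrt 2) :
    J.charpoly = Polynomial.X ^ 2 + Polynomial.C ((r - 1) ^ 2 / (4 * r)) ∧
    spectrum ℂ (J.map (algebraMap ℝ ℂ)) =
      {Complex.I * ((r : ℂ) - 1) / (2 * (Real.sqrt r : ℂ)),
       -(Complex.I * ((r : ℂ) - 1) / (2 * (Real.sqrt r : ℂ)))} ∧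
    (∀ μ ∈ spectrum ℂ (J.map (algebraMap ℝ ℂ)),
      ‖μ‖ = |r - 1| / (2 * Real.sqrt r)) ∧
    (|r - 1| / (2 * Real.sqrt r) < 1 ↔ r₀⁻¹ < r ∧ r < r₀) ∧
    (|r - 1| / (2 * Real.sqrt r) = 1 ↔ r = r₀ ∨ r = r₀⁻¹) ∧
    (1 < |r - 1| / (2 * Real.sqrt r) ↔ r < r₀⁻¹ ∨ r₀ < r) ∧
    (|r - 1| / (2 * Real.sqrt r) = 1 ↔ r ^ 2 - 6 * r + 1 = 0) := by
  subst hJ hr₀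
  have hspec : spectrum ℂ ((!![0, (1 - r) / (2 * r); (r - 1) / 2, 0]).map (algebraMap ℝ ℂ)) =
      {Complex.I * ((r : ℂ) - 1) / (2 * (√r : ℂ)),
       -(Complex.I * ((r : ℂ) - 1) / (2 * (√r : ℂ)))} := by
    rw [Matrix.map_antidiag (map_zero _)]
    exact Matrix.spectrum_antidiag (sq_I_mul_sub_one_div_two_sqrt hr)
  refine ⟨?_, hspec, ?_, ?_, ?_, ?_, abs_sub_one_div_two_sqrt_eq_one_iff hr⟩
  · rw [Matrix.charpoly_antidiag, tullock_antidiag_mul hr.ne', map_neg, sub_neg_eq_add]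
  · rw [hspec]
    rintro μ (rfl | rfl) <;> simp only [norm_neg, norm_I_mul_sub_one_div_two_sqrt]
  · rw [abs_sub_one_div_two_sqrt_lt_one_iff hr, sq_sub_six_mul_add_one_eq_mul,
      sub_mul_sub_neg_iff _ inv_three_add_two_mul_sqrt_two_lt.le]
  · rw [abs_sub_one_div_two_sqrt_eq_one_iff hr, sq_sub_six_mul_add_one_eq_mul, mul_eq_zero,
      sub_eq_zero, sub_eq_zero, or_comm]
  · rw [one_lt_abs_sub_one_div_two_sqrt_iff hr, sq_sub_six_mul_add_one_eq_mul,
      sub_mul_sub_pos_iff _ inv_three_add_two_mul_sqrt_two_lt.le]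
end
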